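/- The polynomial K₁ = a₀a₃ + a₁a₂ in the coefficients of a binary cubic a = a₀x³ + a₁x²y + a₂xy² + a₃y³ over a field F of characteristic 2 is invariant under the action of SL₂(F) by linear substitution of variables; moreover K₁² equals the discriminant of the binary cubic reduced modulo 2 (i.e., the reduction mod 2 of the classical discriminant a₁²a₂² + 18a₀a₁a₂a₃ − 4a₀a₂³ − 4a₁³a₃ − 27a₀²a₃² is (a₀a₃ + a₁a₂)²). -/
import Mathlib


open MvPolynomial Matrix

noncomputable section

/-- The binary cubic over `F` with coefficient vector `a`:
`a₀x³ + a₁x²y + a₂xy² + a₃y³`. -/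
def cubic (F : Type) [Field F] (a : Fin 4 → F) : MvPolynomial (Fin 2) F :=
  ∑ i : Fin 4, C (a i) * X 0 ^ (3 - (i : ℕ)) * X 1 ^ (i : ℕ)

/-- The action of `γ ∈ SL₂(F)` on binary forms by linear substitution of variables. -/
def actγ (F : Type) [Field F] (γ : Matrix.SpecialLinearGroup (Fin 2) F)
    (p : MvPolynomial (Fin 2) F) : MvPolynomial (Fin 2) F :=
  aeval (fun i : Fin 2 => ∑ j : Fin 2, C (γ.1 i j) * X j) p

lemma cubic_eval (F : Type) [Field F] (a : Fin 4 → F) :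
    aeval (![Polynomial.X, 1] : Fin 2 → Polynomial F) (cubic F a) =
      Polynomial.C (a 0) * Polynomial.X ^ 3 + Polynomial.C (a 1) * Polynomial.X ^ 2 +
        Polynomial.C (a 2) * Polynomial.X + Polynomial.C (a 3) := by
  simp only [cubic, Fin.sum_univ_four, map_add, _root_.map_mul, map_pow, aeval_X, aeval_C,
    Polynomial.algebraMap_eq, Matrix.cons_val_zero, Matrix.cons_val_one, Matrix.head_cons,
    (show ((0:Fin 4):ℕ) = 0 from rfl), (show ((1:Fin 4):ℕ) = 1 from rfl),
    (show ((2:Fin 4):ℕ) = 2 from rfl), (show ((3:Fin 4):ℕ) = 3 from rfl)]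
  norm_num
  try ring

lemma cubic_inj (F : Type) [Field F] (a b : Fin 4 → F) (h : cubic F a = cubic F b) : a = b := by
  have h' := congrArg (aeval (![Polynomial.X, 1] : Fin 2 → Polynomial F)) h
  rw [cubic_eval, cubic_eval] at h'
  funext i
  fin_cases i
  · have := congrArg (Polynomial.coeff · 3) h'
    simpa [Polynomial.coeff_X_pow] using this
  · have := congrArg (Polynomial.coeff · 2) h'
    simpa [Polynomial.coeff_X_pow] using this
  · have := congrArg (Polynomial.coeff · 1) h'
    simpa [Polynomial.coeff_X_pow] using this
  · have := congrArg (Polynomial.coeff · 0) h'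
    simpa [Polynomial.coeff_X_pow] using this

lemma actγ_cubic (F : Type) [Field F] (γ : Matrix.SpecialLinearGroup (Fin 2) F)
    (a : Fin 4 → F) :
    actγ F γ (cubic F a) = cubic F
      ![a 0 * γ.1 0 0 ^ 3 + a 1 * γ.1 0 0 ^ 2 * γ.1 1 0 + a 2 * γ.1 0 0 * γ.1 1 0 ^ 2
          + a 3 * γ.1 1 0 ^ 3,
        3 * a 0 * γ.1 0 0 ^ 2 * γ.1 0 1
          + a 1 * (γ.1 0 0 ^ 2 * γ.1 1 1 + 2 * γ.1 0 0 * γ.1 0 1 * γ.1 1 0)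
          + a 2 * (γ.1 0 1 * γ.1 1 0 ^ 2 + 2 * γ.1 0 0 * γ.1 1 0 * γ.1 1 1)
          + 3 * a 3 * γ.1 1 0 ^ 2 * γ.1 1 1,
        3 * a 0 * γ.1 0 0 * γ.1 0 1 ^ 2
          + a 1 * (γ.1 0 1 ^ 2 * γ.1 1 0 + 2 * γ.1 0 0 * γ.1 0 1 * γ.1 1 1)
          + a 2 * (γ.1 0 0 * γ.1 1 1 ^ 2 + 2 * γ.1 0 1 * γ.1 1 0 * γ.1 1 1)
          + 3 * a 3 * γ.1 1 0 * γ.1 1 1 ^ 2,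
        a 0 * γ.1 0 1 ^ 3 + a 1 * γ.1 0 1 ^ 2 * γ.1 1 1 + a 2 * γ.1 0 1 * γ.1 1 1 ^ 2
          + a 3 * γ.1 1 1 ^ 3] := by
  simp only [actγ, cubic, Fin.sum_univ_four, Fin.sum_univ_two, map_add, _root_.map_mul, map_pow,
    aeval_X, aeval_C, MvPolynomial.algebraMap_eq, Matrix.cons_val_zero, Matrix.cons_val_one,
    Matrix.head_cons, Matrix.cons_val_two, Matrix.tail_cons, Matrix.cons_val_three,
    map_ofNat,
    (show ((0:Fin 4):ℕ) = 0 from rfl), (show ((1:Fin 4):ℕ) = 1 from rfl),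
    (show ((2:Fin 4):ℕ) = 2 from rfl), (show ((3:Fin 4):ℕ) = 3 from rfl)]
  norm_num
  try ring

/-- Over a field `F` of characteristic `2`, the polynomial `K₁ = a₀a₃ + a₁a₂` in the
coefficients of a binary cubic is an `SL₂(F)`-invariant, and `K₁²` equals the reduction
mod `2` of the classical discriminant
`a₁²a₂² + 18a₀a₁a₂a₃ − 4a₀a₂³ − 4a₁³a₃ − 27a₀²a₃²`. -/
theorem K1_invariant_char_two (F : Type) [Field F] (hchar : CharP F 2) :
    (∀ (γ : Matrix.SpecialLinearGroup (Fin 2) F) (a a' : Fin 4 → F),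
      cubic F a' = actγ F γ (cubic F a) →
        a' 0 * a' 3 + a' 1 * a' 2 = a 0 * a 3 + a 1 * a 2) ∧
    ∀ a : Fin 4 → F,
      (a 0 * a 3 + a 1 * a 2) ^ 2 =
        (a 1) ^ 2 * (a 2) ^ 2 + 18 * (a 0 * a 1 * a 2 * a 3)
          - 4 * (a 0 * (a 2) ^ 3) - 4 * ((a 1) ^ 3 * a 3) - 27 * ((a 0) ^ 2 * (a 3) ^ 2) := by
  have h2 : (2 : F) = 0 := by
    haveI := hchar
    exact_mod_cast CharP.cast_eq_zero F 2
  constructor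
  · intro γ a a' h
    rw [actγ_cubic] at h
    have hB := cubic_inj F a' _ h
    have h0 := congrFun hB 0
    have h1 := congrFun hB 1
    have h2' := congrFun hB 2
    have h3 := congrFun hB 3
    simp only [Matrix.cons_val_zero, Matrix.cons_val_one, Matrix.head_cons,
      Matrix.cons_val_two, Matrix.tail_cons, Matrix.cons_val_three] at h0 h1 h2' h3
    set p := γ.1 0 0 with hp
    set q := γ.1 0 1 with hq
    set r := γ.1 1 0 with hr
    set s := γ.1 1 1 with hs
    have hdet : p * s - q * r = 1 := by
      have := γ.2
      rw [Matrix.det_fin_two] at this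
      rw [hp, hq, hr, hs]
      exact this
    rw [h0, h1, h2', h3]
    linear_combination
      (10*(a 2)*(a 3)*r^2*s^2 + 2*(a 2)^2*r*s + 8*(a 2)^2*q*r^2*s + 2*(a 2)^2*p*r*s^2
        + 4*(a 1)*(a 3)*r*s + 16*(a 1)*(a 3)*q*r^2*s + 4*(a 1)*(a 3)*p*r*s^2
        + (a 1)*(a 2) + 11*(a 1)*(a 2)*q*r + 19*(a 1)*(a 2)*q^2*r^2 + (a 1)*(a 2)*p*s
        + 10*(a 1)*(a 2)*p*q*r*s + (a 1)*(a 2)*p^2*s^2 + 2*(a 1)^2*p*q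
        + 8*(a 1)^2*p*q^2*r + 2*(a 1)^2*p^2*q*s + (a 0)*(a 3) + 11*(a 0)*(a 3)*q*r
        + 19*(a 0)*(a 3)*q^2*r^2 + (a 0)*(a 3)*p*s + 10*(a 0)*(a 3)*p*q*r*s
        + (a 0)*(a 3)*p^2*s^2 + 4*(a 0)*(a 2)*p*q + 16*(a 0)*(a 2)*p*q^2*r
        + 4*(a 0)*(a 2)*p^2*q*s + 10*(a 0)*(a 1)*p^2*q^2) * hdet +
      (5*(a 3)^2*r^3*s^3 + 5*(a 2)*(a 3)*r^2*s^2 + 10*(a 2)*(a 3)*q*r^3*s^2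
        + (a 2)^2*r*s + 5*(a 2)^2*q*r^2*s + 5*(a 2)^2*q^2*r^3*s + 2*(a 1)*(a 3)*r*s
        + 10*(a 1)*(a 3)*q*r^2*s + 10*(a 1)*(a 3)*q^2*r^3*s + 6*(a 1)*(a 2)*q*r
        + 15*(a 1)*(a 2)*q^2*r^2 + 10*(a 1)*(a 2)*q^3*r^3 + (a 1)^2*p*q
        + 5*(a 1)^2*p*q^2*r + 5*(a 1)^2*p*q^3*r^2 + 6*(a 0)*(a 3)*q*r
        + 15*(a 0)*(a 3)*q^2*r^2 + 10*(a 0)*(a 3)*q^3*r^3 + 2*(a 0)*(a 2)*p*q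
        + 10*(a 0)*(a 2)*p*q^2*r + 10*(a 0)*(a 2)*p*q^3*r^2 + 5*(a 0)*(a 1)*p^2*q^2
        + 10*(a 0)*(a 1)*p^2*q^3*r + 5*(a 0)^2*p^3*q^3) * h2
  · intro a
    linear_combination (14*(a 0)^2*(a 3)^2 - 8*(a 0)*(a 1)*(a 2)*(a 3)
      + 2*(a 0)*(a 2)^3 + 2*(a 1)^3*(a 3)) * h2
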